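/- Let p be a prime with p ≡ 3 (mod 4) and let g^2 and G = ∑_{t=0}^{2p-1} g^2_t·4^t be as in the Kim et al. construction (g^2_t = φ(b_t, c_t) for even t and φ(b_t, 1-c_t) for odd t, indices mod p). Then gcd(G, 4^p + 1) = 5 if 5 divides p - 2, and 1 otherwise. -/

import Mathlib

/-- The Legendre sequence `b` of period `p`. -/
def legb (p : ℕ) [Fact p.Prime] (t : ℕ) : ℤ :=
  if (t : ZMod p) = 0 then 0 else (1 - legendreSym p (t : ℤ)) / 2

/-- The Legendre sequence `c` of period `p`. -/
def legc (p : ℕ) [Fact p.Prime] (t : ℕ) : ℤ :=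
  if (t : ZMod p) = 0 then 1 else (1 - legendreSym p (t : ℤ)) / 2

/-- The Gray map `φ(a,e) = 2a - a(e-1) - (a-1)e`. -/
def gray (a e : ℤ) : ℤ := 2 * a - a * (e - 1) - (a - 1) * e

/-!
Since `b_t = c_t` for `t ≢ 0 (mod p)` and `p` is odd, the Gray map gives
`g²_t - g²_{p+t} = -(-1)^t` for `0 < t < p`, and `g²_0 - g²_p = 1`. Splitting `G` into its two
halves therefore yields `G ≡ 2 - S (mod 4^p + 1)` with `S = ∑_{t<p} (-4)^t = (4^p + 1) / 5`.
As `S` is odd, `gcd(2 - S, 5 S) = gcd(2 - S, 5)`, and `S ≡ p (mod 5)` because `-4 ≡ 1`.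
-/

open Finset

lemma sum_range_two_mul_mul_pow {R : Type*} [CommRing R] (f : ℕ → R) (x : R) (n : ℕ) :
    ∑ t ∈ range (2 * n), f t * x ^ t =
      ∑ t ∈ range n, (f t - f (n + t)) * x ^ t + (x ^ n + 1) * ∑ t ∈ range n, f (n + t) * x ^ t := by
  rw [two_mul, sum_range_add, mul_sum]
  simp only [← sum_add_distrib]
  exact sum_congr rfl fun t _ => by ring

lemma five_mul_geom_sum_neg_four {n : ℕ} (hn : Odd n) :
    5 * ∑ t ∈ range n, (-4 : ℤ) ^ t = 4 ^ n + 1 := by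
  have h := geom_sum_mul (-4 : ℤ) n
  rw [hn.neg_pow] at h
  linarith

lemma geom_sum_neg_four_modEq (n : ℕ) : ∑ t ∈ range n, (-4 : ℤ) ^ t ≡ n [ZMOD 5] := by
  have h : ∑ t ∈ range n, (1 : ℤ) ^ t = n := by simp
  exact h ▸ Int.ModEq.sum fun t _ => Int.ModEq.pow t (by decide)

lemma gcd_two_sub_five_mul {S : ℤ} (hS : Odd S) :
    Int.gcd (2 - S) (5 * S) = if 5 ∣ 2 - S then 5 else 1 := by
  have hcop : Int.gcd (2 - S) S = 1 := by
    have h := (Int.isCoprime_two_left.mpr hS).add_mul_right_left (-1)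
    rwa [neg_one_mul, ← sub_eq_add_neg, Int.isCoprime_iff_gcd_eq_one] at h
  rw [Int.gcd_mul_left_right_of_gcd_eq_one hcop]
  split_ifs with h
  · exact_mod_cast Int.gcd_eq_right (by norm_num) h
  · have h5 : Prime (5 : ℤ) := Int.prime_iff_natAbs_prime.mpr (by norm_num)
    exact Int.isCoprime_iff_gcd_eq_one.mp ((h5.coprime_iff_not_dvd.mpr h).symm)

lemma gray_sub_gray_one_sub_self (x : ℤ) : gray x x - gray x (1 - x) = -(2 * x - 1) ^ 2 := by
  unfold gray
  ring

section Legendre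

variable {p : ℕ} [Fact p.Prime]

lemma legb_add_left_self (t : ℕ) : legb p (p + t) = legb p t := by
  simp [legb, legendreSym]

lemma legc_add_left_self (t : ℕ) : legc p (p + t) = legc p t := by
  simp [legc, legendreSym]

lemma legc_eq_legb {t : ℕ} (ht : (t : ZMod p) ≠ 0) : legc p t = legb p t := by
  simp [legb, legc, ht]

lemma sq_two_mul_legb_sub_one {t : ℕ} (ht : (t : ZMod p) ≠ 0) : (2 * legb p t - 1) ^ 2 = 1 := by
  rcases legendreSym.eq_one_or_neg_one p (a := t) (by exact_mod_cast ht) with h | h <;>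
    simp [legb, ht, h]

variable (p) in
/-- The quaternary sequence `g²` of Kim et al. -/
def kimSeq (t : ℕ) : ℤ :=
  if t % 2 = 0 then gray (legb p t) (legc p t) else gray (legb p t) (1 - legc p t)

lemma kimSeq_zero_sub_kimSeq_self (hp : Odd p) : kimSeq p 0 - kimSeq p p = 1 := by
  simp [kimSeq, legb, legc, gray, Nat.odd_iff.mp hp]

lemma kimSeq_sub_kimSeq_add_left (hp : Odd p) {t : ℕ} (ht : (t : ZMod p) ≠ 0) :
    kimSeq p t - kimSeq p (p + t) = -(-1) ^ t := by
  have hsq := sq_two_mul_legb_sub_one ht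
  have hgray := gray_sub_gray_one_sub_self (legb p t)
  have hp2 := Nat.odd_iff.mp hp
  simp only [kimSeq, legb_add_left_self, legc_add_left_self, legc_eq_legb ht]
  rcases Nat.even_or_odd t with ht2 | ht2
  · have ht2' := Nat.even_iff.mp ht2
    rw [if_pos ht2', if_neg (by omega), ht2.neg_one_pow]
    linarith
  · have ht2' := Nat.odd_iff.mp ht2
    rw [if_neg (by omega), if_pos (by omega), ht2.neg_one_pow]
    linarith

lemma sum_kimSeq_sub_mul_four_pow (hp : Odd p) :
    ∑ t ∈ range p, (kimSeq p t - kimSeq p (p + t)) * 4 ^ t = 2 - ∑ t ∈ range p, (-4 : ℤ) ^ t := by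
  have hterm : ∀ t ∈ range p,
      (kimSeq p t - kimSeq p (p + t)) * 4 ^ t = (if t = 0 then 2 else 0) - (-4) ^ t := by
    intro t ht
    rcases eq_or_ne t 0 with rfl | h0
    · rw [add_zero, kimSeq_zero_sub_kimSeq_self hp]
      norm_num
    · have htp : (t : ZMod p) ≠ 0 := by
        rw [Ne, ZMod.natCast_eq_zero_iff]
        exact Nat.not_dvd_of_pos_of_lt (Nat.pos_of_ne_zero h0) (mem_range.mp ht)
      rw [kimSeq_sub_kimSeq_add_left hp htp, if_neg h0, neg_pow (4 : ℤ)]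
      ring
  rw [sum_congr rfl hterm, sum_sub_distrib, sum_ite_eq', if_pos (mem_range.mpr hp.pos)]

end Legendre

theorem stmt10 (p : ℕ) [Fact p.Prime] (h3 : p % 4 = 3) :
    Int.gcd
      (∑ t ∈ Finset.range (2 * p),
        (if t % 2 = 0 then gray (legb p t) (legc p t)
          else gray (legb p t) (1 - legc p t)) * 4 ^ t)
      ((4:ℤ) ^ p + 1) = if 5 ∣ p - 2 then 5 else 1 := by
  have hp : Odd p := Nat.odd_iff.mpr (by omega)
  set S := ∑ t ∈ range p, (-4 : ℤ) ^ t
  have h5S : 5 * S = 4 ^ p + 1 := five_mul_geom_sum_neg_four hp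
  have hS : Odd S := by
    have h4 : Even ((4 : ℤ) ^ p) := Int.even_pow.mpr ⟨by decide, hp.pos.ne'⟩
    exact (Int.odd_mul.mp (h5S ▸ h4.add_one)).2
  have hcond : (5 : ℤ) ∣ 2 - S ↔ 5 ∣ p - 2 := by
    have hSp : S % 5 = p % 5 := geom_sum_neg_four_modEq p
    have hp2 : 2 ≤ p := (Fact.out : p.Prime).two_le
    omega
  change Int.gcd (∑ t ∈ range (2 * p), kimSeq p t * 4 ^ t) _ = _
  rw [sum_range_two_mul_mul_pow, sum_kimSeq_sub_mul_four_pow hp, ← h5S,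
    Int.gcd_add_mul_left_left, gcd_two_sub_five_mul hS]
  simp only [hcond]
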